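/- arXiv:2001.09497 — 7 statements merged into one kernel-verified Lean document; each statement's English description precedes it below -/
import Mathlib

section
/- There exists a finite simple graph G, whose vertex set carries a linear order in which no two edges cross (i.e., no vertices a < c < b < d with ab and cd both edges of G), such that the adjacency poset A_G has dimension at least 4; that is, no three linear orders extending A_G have intersection equal to A_G. -/
/-- The order relation of the adjacency poset of a simple graph `G`:
on `V ⊕ V`, minimal elements `Sum.inl x` (vertices) and maximal elements
`Sum.inr y` (their barred copies), with `x ≤ ȳ` iff `x` and `y` are adjacent. -/
def adjLE {V : Type*} (G : SimpleGraph V) : V ⊕ V → V ⊕ V → Prop :=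
  fun p q => p = q ∨ ∃ a b : V, p = Sum.inl a ∧ q = Sum.inr b ∧ G.Adj a b

/-- `L` is a linear extension of the relation `P`. -/
def IsLinearExt {X : Type*} (P L : X → X → Prop) : Prop :=
  IsLinearOrder X L ∧ ∀ p q, P p q → L p q

/-- The family `L` of linear orders is a realizer of `P`:
each member extends `P` and their intersection is `P`. -/
def IsRealizer {X : Type*} (P : X → X → Prop) {n : ℕ}
    (L : Fin n → X → X → Prop) : Prop :=
  (∀ i, IsLinearExt P (L i)) ∧ ∀ p q, P p q ↔ ∀ i, L i p q

/-- An outerplanar embedding, combinatorially: all vertices on a line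
(the linear order on `V`), no two edges cross. -/
def NoCrossing {V : Type*} [LinearOrder V] (G : SimpleGraph V) : Prop :=
  ∀ a b c d : V, a < c → c < b → b < d → G.Adj a b → ¬ G.Adj c d

def gEdges : List (Fin 10 × Fin 10) :=
  [(0,1),(0,3),(0,9),(1,2),(1,3),(2,3),(3,4),(3,5),(3,6),(3,9),(4,5),(5,6),(6,9),(7,8),(7,9),(8,9)]

def G10 : SimpleGraph (Fin 10) where
  Adj x y := x ≠ y ∧ ((x, y) ∈ gEdges ∨ (y, x) ∈ gEdges)
  symm := ⟨fun x y h => ⟨Ne.symm h.1, h.2.symm⟩⟩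
  loopless := ⟨fun x h => h.1 rfl⟩

instance : DecidableRel G10.Adj := fun x y =>
  inferInstanceAs (Decidable (x ≠ y ∧ ((x, y) ∈ gEdges ∨ (y, x) ∈ gEdges)))

theorem htr (L : Fin 3 → (Fin 10 ⊕ Fin 10 → Fin 10 ⊕ Fin 10 → Prop))
    (hR : IsRealizer (adjLE G10) L) (i : Fin 3) {p q r : Fin 10 ⊕ Fin 10} (h1 : L i p q) (h2 : L i q r) : L i p r :=
  (hR.1 i).1.toIsPartialOrder.toIsPreorder.toIsTrans.trans p q r h1 h2

theorem htot (L : Fin 3 → (Fin 10 ⊕ Fin 10 → Fin 10 ⊕ Fin 10 → Prop))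
    (hR : IsRealizer (adjLE G10) L) (i : Fin 3) (p q : Fin 10 ⊕ Fin 10) (h : ¬ L i p q) : L i q p :=
  ((hR.1 i).1.toTotal.total p q).resolve_left h

theorem hadj (L : Fin 3 → (Fin 10 ⊕ Fin 10 → Fin 10 ⊕ Fin 10 → Prop))
    (hR : IsRealizer (adjLE G10) L) (i : Fin 3) (x y : Fin 10) (h : G10.Adj x y) :
    L i (Sum.inl x) (Sum.inr y) :=
  (hR.1 i).2 _ _ (Or.inr ⟨x, y, rfl, rfl, h⟩)

theorem hinc (L : Fin 3 → (Fin 10 ⊕ Fin 10 → Fin 10 ⊕ Fin 10 → Prop))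
    (hR : IsRealizer (adjLE G10) L) (p q : Fin 10 ⊕ Fin 10) (h : ¬ adjLE G10 p q) : ∃ i, ¬ L i p q :=
  not_forall.mp (fun hall => h ((hR.2 p q).mpr hall))

instance instDecAdjLE : ∀ p q, Decidable (adjLE G10 p q) := fun p q =>
  inferInstanceAs (Decidable (p = q ∨ ∃ a b : Fin 10, p = Sum.inl a ∧ q = Sum.inr b ∧ G10.Adj a b))

theorem fin3_cases : ∀ a b c i : Fin 3, a ≠ b → a ≠ c → b ≠ c → a = i ∨ b = i ∨ c = i := by
  decide

theorem fin3_third : ∀ a b : Fin 3, a ≠ b → ∃ c, a ≠ c ∧ b ≠ c := by decide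

theorem key (L : Fin 3 → (Fin 10 ⊕ Fin 10 → Fin 10 ⊕ Fin 10 → Prop))
    (hR : IsRealizer (adjLE G10) L) (a b c : Fin 3)
    (hab : a ≠ b) (hac : a ≠ c) (hbc : b ≠ c)
    (ha3 : L a (Sum.inr 3) (Sum.inl 3)) (hb9 : L b (Sum.inr 9) (Sum.inl 9)) : False := by
  have adj_0_1 : G10.Adj 0 1 := by decide
  have adj_0_3 : G10.Adj 0 3 := by decide
  have adj_0_9 : G10.Adj 0 9 := by decide
  have adj_1_0 : G10.Adj 1 0 := by decide
  have adj_1_2 : G10.Adj 1 2 := by decide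
  have adj_1_3 : G10.Adj 1 3 := by decide
  have adj_2_1 : G10.Adj 2 1 := by decide
  have adj_2_3 : G10.Adj 2 3 := by decide
  have adj_3_0 : G10.Adj 3 0 := by decide
  have adj_3_1 : G10.Adj 3 1 := by decide
  have adj_3_2 : G10.Adj 3 2 := by decide
  have adj_3_4 : G10.Adj 3 4 := by decide
  have adj_3_5 : G10.Adj 3 5 := by decide
  have adj_3_6 : G10.Adj 3 6 := by decide
  have adj_3_9 : G10.Adj 3 9 := by decide
  have adj_4_3 : G10.Adj 4 3 := by decide
  have adj_4_5 : G10.Adj 4 5 := by decide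
  have adj_5_3 : G10.Adj 5 3 := by decide
  have adj_5_4 : G10.Adj 5 4 := by decide
  have adj_5_6 : G10.Adj 5 6 := by decide
  have adj_6_3 : G10.Adj 6 3 := by decide
  have adj_6_5 : G10.Adj 6 5 := by decide
  have adj_6_9 : G10.Adj 6 9 := by decide
  have adj_7_8 : G10.Adj 7 8 := by decide
  have adj_7_9 : G10.Adj 7 9 := by decide
  have adj_8_7 : G10.Adj 8 7 := by decide
  have adj_8_9 : G10.Adj 8 9 := by decide
  have adj_9_0 : G10.Adj 9 0 := by decide
  have adj_9_3 : G10.Adj 9 3 := by decide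
  have adj_9_6 : G10.Adj 9 6 := by decide
  have adj_9_7 : G10.Adj 9 7 := by decide
  have adj_9_8 : G10.Adj 9 8 := by decide
  obtain ⟨i0, hne0⟩ := hinc L hR (Sum.inl 9) (Sum.inr 2) (by decide)
  rcases fin3_cases a b c i0 hab hac hbc with rfl|rfl|rfl
  · exact hne0 (htr L hR a (hadj L hR a 9 3 adj_9_3) (htr L hR a ha3 (hadj L hR a 3 2 adj_3_2)))
  · have h0 : L b (Sum.inr 2) (Sum.inl 9) := htot L hR b (Sum.inl 9) (Sum.inr 2) hne0
    obtain ⟨i1, hne1⟩ := hinc L hR (Sum.inl 1) (Sum.inr 6) (by decide)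
    rcases fin3_cases a b c i1 hab hac hbc with rfl|rfl|rfl
    · exact hne1 (htr L hR a (hadj L hR a 1 3 adj_1_3) (htr L hR a ha3 (hadj L hR a 3 6 adj_3_6)))
    · exact hne1 (htr L hR b (hadj L hR b 1 2 adj_1_2) (htr L hR b h0 (hadj L hR b 9 6 adj_9_6)))
    · have h1 : L c (Sum.inr 6) (Sum.inl 1) := htot L hR c (Sum.inl 1) (Sum.inr 6) hne1
      obtain ⟨i2, hne2⟩ := hinc L hR (Sum.inl 5) (Sum.inr 0) (by decide)
      rcases fin3_cases a b c i2 hab hac hbc with rfl|rfl|rfl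
      · exact hne2 (htr L hR a (hadj L hR a 5 3 adj_5_3) (htr L hR a ha3 (hadj L hR a 3 0 adj_3_0)))
      · have h2 : L b (Sum.inr 0) (Sum.inl 5) := htot L hR b (Sum.inl 5) (Sum.inr 0) hne2
        obtain ⟨i3, hne3⟩ := hinc L hR (Sum.inl 9) (Sum.inr 4) (by decide)
        rcases fin3_cases a b c i3 hab hac hbc with rfl|rfl|rfl
        · exact hne3 (htr L hR a (hadj L hR a 9 3 adj_9_3) (htr L hR a ha3 (hadj L hR a 3 4 adj_3_4)))
        · exact hne3 (htr L hR b (hadj L hR b 9 0 adj_9_0) (htr L hR b h2 (hadj L hR b 5 4 adj_5_4)))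
        · have h3 : L c (Sum.inr 4) (Sum.inl 9) := htot L hR c (Sum.inl 9) (Sum.inr 4) hne3
          obtain ⟨i4, hne4⟩ := hinc L hR (Sum.inl 3) (Sum.inr 8) (by decide)
          rcases fin3_cases a b c i4 hab hac hbc with rfl|rfl|rfl
          · have h4 : L a (Sum.inr 8) (Sum.inl 3) := htot L hR a (Sum.inl 3) (Sum.inr 8) hne4
            obtain ⟨i5, hne5⟩ := hinc L hR (Sum.inl 7) (Sum.inr 0) (by decide)
            rcases fin3_cases a b c i5 hab hac hbc with rfl|rfl|rfl
            · exact hne5 (htr L hR a (hadj L hR a 7 8 adj_7_8) (htr L hR a h4 (hadj L hR a 3 0 adj_3_0)))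
            · exact hne5 (htr L hR b (hadj L hR b 7 9 adj_7_9) (htr L hR b hb9 (hadj L hR b 9 0 adj_9_0)))
            · have h5 : L c (Sum.inr 0) (Sum.inl 7) := htot L hR c (Sum.inl 7) (Sum.inr 0) hne5
              obtain ⟨i6, hne6⟩ := hinc L hR (Sum.inl 1) (Sum.inr 8) (by decide)
              rcases fin3_cases a b c i6 hab hac hbc with rfl|rfl|rfl
              · have h6 : L a (Sum.inr 8) (Sum.inl 1) := htot L hR a (Sum.inl 1) (Sum.inr 8) hne6
                obtain ⟨i7, hne7⟩ := hinc L hR (Sum.inl 7) (Sum.inr 3) (by decide)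
                rcases fin3_cases a b c i7 hab hac hbc with rfl|rfl|rfl
                · exact hne7 (htr L hR a (hadj L hR a 7 8 adj_7_8) (htr L hR a h6 (hadj L hR a 1 3 adj_1_3)))
                · exact hne7 (htr L hR b (hadj L hR b 7 9 adj_7_9) (htr L hR b hb9 (hadj L hR b 9 3 adj_9_3)))
                · have h7 : L c (Sum.inr 3) (Sum.inl 7) := htot L hR c (Sum.inl 7) (Sum.inr 3) hne7
                  obtain ⟨i8, hne8⟩ := hinc L hR (Sum.inl 4) (Sum.inr 9) (by decide)
                  rcases fin3_cases a b c i8 hab hac hbc with rfl|rfl|rfl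
                  · exact hne8 (htr L hR a (hadj L hR a 4 3 adj_4_3) (htr L hR a ha3 (hadj L hR a 3 9 adj_3_9)))
                  · have h8 : L b (Sum.inr 9) (Sum.inl 4) := htot L hR b (Sum.inl 4) (Sum.inr 9) hne8
                    obtain ⟨i9, hne9⟩ := hinc L hR (Sum.inl 0) (Sum.inr 5) (by decide)
                    rcases fin3_cases a b c i9 hab hac hbc with rfl|rfl|rfl
                    · exact hne9 (htr L hR a (hadj L hR a 0 3 adj_0_3) (htr L hR a ha3 (hadj L hR a 3 5 adj_3_5)))
                    · exact hne9 (htr L hR b (hadj L hR b 0 9 adj_0_9) (htr L hR b h8 (hadj L hR b 4 5 adj_4_5)))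
                    · have h9 : L c (Sum.inr 5) (Sum.inl 0) := htot L hR c (Sum.inl 0) (Sum.inr 5) hne9
                      obtain ⟨i10, hne10⟩ := hinc L hR (Sum.inl 6) (Sum.inr 1) (by decide)
                      rcases fin3_cases a b c i10 hab hac hbc with rfl|rfl|rfl
                      · exact hne10 (htr L hR a (hadj L hR a 6 3 adj_6_3) (htr L hR a ha3 (hadj L hR a 3 1 adj_3_1)))
                      · have h10 : L b (Sum.inr 1) (Sum.inl 6) := htot L hR b (Sum.inl 6) (Sum.inr 1) hne10
                        obtain ⟨i11, hne11⟩ := hinc L hR (Sum.inl 2) (Sum.inr 9) (by decide)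
                        rcases fin3_cases a b c i11 hab hac hbc with rfl|rfl|rfl
                        · exact hne11 (htr L hR a (hadj L hR a 2 3 adj_2_3) (htr L hR a ha3 (hadj L hR a 3 9 adj_3_9)))
                        · exact hne11 (htr L hR b (hadj L hR b 2 1 adj_2_1) (htr L hR b h10 (hadj L hR b 6 9 adj_6_9)))
                        · exact hne11 (htr L hR c (hadj L hR c 2 3 adj_2_3) (htr L hR c h7 (hadj L hR c 7 9 adj_7_9)))
                      · exact hne10 (htr L hR c (hadj L hR c 6 5 adj_6_5) (htr L hR c h9 (hadj L hR c 0 1 adj_0_1)))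
                  · exact hne8 (htr L hR c (hadj L hR c 4 3 adj_4_3) (htr L hR c h7 (hadj L hR c 7 9 adj_7_9)))
              · exact hne6 (htr L hR b (hadj L hR b 1 2 adj_1_2) (htr L hR b h0 (hadj L hR b 9 8 adj_9_8)))
              · exact hne6 (htr L hR c (hadj L hR c 1 0 adj_1_0) (htr L hR c h5 (hadj L hR c 7 8 adj_7_8)))
          · exact hne4 (htr L hR b (hadj L hR b 3 9 adj_3_9) (htr L hR b hb9 (hadj L hR b 9 8 adj_9_8)))
          · exact hne4 (htr L hR c (hadj L hR c 3 4 adj_3_4) (htr L hR c h3 (hadj L hR c 9 8 adj_9_8)))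
      · exact hne2 (htr L hR c (hadj L hR c 5 6 adj_5_6) (htr L hR c h1 (hadj L hR c 1 0 adj_1_0)))
  · have h0 : L c (Sum.inr 2) (Sum.inl 9) := htot L hR c (Sum.inl 9) (Sum.inr 2) hne0
    obtain ⟨i12, hne12⟩ := hinc L hR (Sum.inl 1) (Sum.inr 6) (by decide)
    rcases fin3_cases a b c i12 hab hac hbc with rfl|rfl|rfl
    · exact hne12 (htr L hR a (hadj L hR a 1 3 adj_1_3) (htr L hR a ha3 (hadj L hR a 3 6 adj_3_6)))
    · have h12 : L b (Sum.inr 6) (Sum.inl 1) := htot L hR b (Sum.inl 1) (Sum.inr 6) hne12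
      obtain ⟨i13, hne13⟩ := hinc L hR (Sum.inl 5) (Sum.inr 0) (by decide)
      rcases fin3_cases a b c i13 hab hac hbc with rfl|rfl|rfl
      · exact hne13 (htr L hR a (hadj L hR a 5 3 adj_5_3) (htr L hR a ha3 (hadj L hR a 3 0 adj_3_0)))
      · exact hne13 (htr L hR b (hadj L hR b 5 6 adj_5_6) (htr L hR b h12 (hadj L hR b 1 0 adj_1_0)))
      · have h13 : L c (Sum.inr 0) (Sum.inl 5) := htot L hR c (Sum.inl 5) (Sum.inr 0) hne13
        obtain ⟨i14, hne14⟩ := hinc L hR (Sum.inl 3) (Sum.inr 7) (by decide)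
        rcases fin3_cases a b c i14 hab hac hbc with rfl|rfl|rfl
        · have h14 : L a (Sum.inr 7) (Sum.inl 3) := htot L hR a (Sum.inl 3) (Sum.inr 7) hne14
          obtain ⟨i15, hne15⟩ := hinc L hR (Sum.inl 9) (Sum.inr 4) (by decide)
          rcases fin3_cases a b c i15 hab hac hbc with rfl|rfl|rfl
          · exact hne15 (htr L hR a (hadj L hR a 9 7 adj_9_7) (htr L hR a h14 (hadj L hR a 3 4 adj_3_4)))
          · have h15 : L b (Sum.inr 4) (Sum.inl 9) := htot L hR b (Sum.inl 9) (Sum.inr 4) hne15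
            obtain ⟨i16, hne16⟩ := hinc L hR (Sum.inl 8) (Sum.inr 6) (by decide)
            rcases fin3_cases a b c i16 hab hac hbc with rfl|rfl|rfl
            · exact hne16 (htr L hR a (hadj L hR a 8 7 adj_8_7) (htr L hR a h14 (hadj L hR a 3 6 adj_3_6)))
            · exact hne16 (htr L hR b (hadj L hR b 8 9 adj_8_9) (htr L hR b hb9 (hadj L hR b 9 6 adj_9_6)))
            · have h16 : L c (Sum.inr 6) (Sum.inl 8) := htot L hR c (Sum.inl 8) (Sum.inr 6) hne16
              obtain ⟨i17, hne17⟩ := hinc L hR (Sum.inl 5) (Sum.inr 7) (by decide)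
              rcases fin3_cases a b c i17 hab hac hbc with rfl|rfl|rfl
              · have h17 : L a (Sum.inr 7) (Sum.inl 5) := htot L hR a (Sum.inl 5) (Sum.inr 7) hne17
                obtain ⟨i18, hne18⟩ := hinc L hR (Sum.inl 8) (Sum.inr 3) (by decide)
                rcases fin3_cases a b c i18 hab hac hbc with rfl|rfl|rfl
                · exact hne18 (htr L hR a (hadj L hR a 8 7 adj_8_7) (htr L hR a h17 (hadj L hR a 5 3 adj_5_3)))
                · exact hne18 (htr L hR b (hadj L hR b 8 9 adj_8_9) (htr L hR b hb9 (hadj L hR b 9 3 adj_9_3)))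
                · have h18 : L c (Sum.inr 3) (Sum.inl 8) := htot L hR c (Sum.inl 8) (Sum.inr 3) hne18
                  obtain ⟨i19, hne19⟩ := hinc L hR (Sum.inl 4) (Sum.inr 9) (by decide)
                  rcases fin3_cases a b c i19 hab hac hbc with rfl|rfl|rfl
                  · exact hne19 (htr L hR a (hadj L hR a 4 3 adj_4_3) (htr L hR a ha3 (hadj L hR a 3 9 adj_3_9)))
                  · have h19 : L b (Sum.inr 9) (Sum.inl 4) := htot L hR b (Sum.inl 4) (Sum.inr 9) hne19
                    obtain ⟨i20, hne20⟩ := hinc L hR (Sum.inl 2) (Sum.inr 9) (by decide)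
                    rcases fin3_cases a b c i20 hab hac hbc with rfl|rfl|rfl
                    · exact hne20 (htr L hR a (hadj L hR a 2 3 adj_2_3) (htr L hR a ha3 (hadj L hR a 3 9 adj_3_9)))
                    · have h20 : L b (Sum.inr 9) (Sum.inl 2) := htot L hR b (Sum.inl 2) (Sum.inr 9) hne20
                      obtain ⟨i21, hne21⟩ := hinc L hR (Sum.inl 0) (Sum.inr 5) (by decide)
                      rcases fin3_cases a b c i21 hab hac hbc with rfl|rfl|rfl
                      · exact hne21 (htr L hR a (hadj L hR a 0 3 adj_0_3) (htr L hR a ha3 (hadj L hR a 3 5 adj_3_5)))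
                      · exact hne21 (htr L hR b (hadj L hR b 0 9 adj_0_9) (htr L hR b h19 (hadj L hR b 4 5 adj_4_5)))
                      · have h21 : L c (Sum.inr 5) (Sum.inl 0) := htot L hR c (Sum.inl 0) (Sum.inr 5) hne21
                        obtain ⟨i22, hne22⟩ := hinc L hR (Sum.inl 6) (Sum.inr 1) (by decide)
                        rcases fin3_cases a b c i22 hab hac hbc with rfl|rfl|rfl
                        · exact hne22 (htr L hR a (hadj L hR a 6 3 adj_6_3) (htr L hR a ha3 (hadj L hR a 3 1 adj_3_1)))
                        · exact hne22 (htr L hR b (hadj L hR b 6 9 adj_6_9) (htr L hR b h20 (hadj L hR b 2 1 adj_2_1)))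
                        · exact hne22 (htr L hR c (hadj L hR c 6 5 adj_6_5) (htr L hR c h21 (hadj L hR c 0 1 adj_0_1)))
                    · exact hne20 (htr L hR c (hadj L hR c 2 3 adj_2_3) (htr L hR c h18 (hadj L hR c 8 9 adj_8_9)))
                  · exact hne19 (htr L hR c (hadj L hR c 4 3 adj_4_3) (htr L hR c h18 (hadj L hR c 8 9 adj_8_9)))
              · exact hne17 (htr L hR b (hadj L hR b 5 4 adj_5_4) (htr L hR b h15 (hadj L hR b 9 7 adj_9_7)))
              · exact hne17 (htr L hR c (hadj L hR c 5 6 adj_5_6) (htr L hR c h16 (hadj L hR c 8 7 adj_8_7)))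
          · exact hne15 (htr L hR c (hadj L hR c 9 0 adj_9_0) (htr L hR c h13 (hadj L hR c 5 4 adj_5_4)))
        · exact hne14 (htr L hR b (hadj L hR b 3 9 adj_3_9) (htr L hR b hb9 (hadj L hR b 9 7 adj_9_7)))
        · exact hne14 (htr L hR c (hadj L hR c 3 2 adj_3_2) (htr L hR c h0 (hadj L hR c 9 7 adj_9_7)))
    · exact hne12 (htr L hR c (hadj L hR c 1 2 adj_1_2) (htr L hR c h0 (hadj L hR c 9 6 adj_9_6)))

/-- There is an outerplanarly embedded finite graph whose adjacency poset
has dimension at least 4: no three linear extensions realize it. -/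
theorem exists_outerplanar_adjacency_poset_dim_ge_four :
    ∃ (V : Type) (_ : Fintype V) (_ : LinearOrder V) (G : SimpleGraph V),
      NoCrossing G ∧
      ¬ ∃ L : Fin 3 → (V ⊕ V → V ⊕ V → Prop), IsRealizer (adjLE G) L := by
  refine ⟨Fin 10, inferInstance, inferInstance, G10, by unfold NoCrossing; decide, ?_⟩
  rintro ⟨L, hR⟩
  obtain ⟨a1, hna⟩ := hinc L hR (Sum.inl 3) (Sum.inr 3) (by decide)
  have ha3 : L a1 (Sum.inr 3) (Sum.inl 3) := htot L hR a1 _ _ hna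
  obtain ⟨b1, hnb⟩ := hinc L hR (Sum.inl 9) (Sum.inr 9) (by decide)
  have hb9 : L b1 (Sum.inr 9) (Sum.inl 9) := htot L hR b1 _ _ hnb
  have hab : a1 ≠ b1 := by
    intro h
    subst h
    exact hna (htr L hR a1 (hadj L hR a1 3 9 (by decide))
      (htr L hR a1 hb9 (hadj L hR a1 9 3 (by decide))))
  obtain ⟨c1, hac, hbc⟩ := fin3_third a1 b1 hab
  exact key L hR a1 b1 c1 hab hac hbc ha3 hb9
end

section
/- Let G be a finite simple graph with nonempty vertex set. If the adjacency poset A_G admits a realizer consisting of n linear extensions, then G has a proper vertex coloring with n colors; consequently the dimension of A_G is at least the chromatic number of G. -/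
/-- If the adjacency poset of a finite graph `G` (with nonempty vertex set) has a
realizer of size `n`, then `G` is properly `n`-colorable; hence the dimension of the
adjacency poset is at least the chromatic number of `G`. -/
theorem colorable_of_adjacency_poset_realizer
    {V : Type*} [Fintype V] [Nonempty V] (G : SimpleGraph V) (n : ℕ)
    (L : Fin n → (V ⊕ V → V ⊕ V → Prop)) (hL : IsRealizer (adjLE G) L) :
    G.Colorable n ∧ G.chromaticNumber ≤ n := by
  obtain ⟨hlin, hiff⟩ := hL
  -- for each vertex x, x ≤ x̄ fails in the poset
  have hnot : ∀ x : V, ¬ adjLE G (Sum.inl x) (Sum.inr x) := by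
    intro x h
    rcases h with h | ⟨a, b, ha, hb, hab⟩
    · exact Sum.inl_ne_inr h
    · rw [Sum.inl.injEq] at ha; rw [Sum.inr.injEq] at hb
      subst ha; subst hb
      exact G.irrefl hab
  have hx : ∀ x : V, ∃ i, ¬ L i (Sum.inl x) (Sum.inr x) := by
    intro x
    by_contra hc
    push_neg at hc
    exact hnot x ((hiff _ _).2 hc)
  choose c hc using hx
  have hproper : ∀ {x y : V}, G.Adj x y → c x ≠ c y := by
    intro x y hxy hce
    set i := c x with hi
    have h1 : L i (Sum.inl x) (Sum.inr y) :=
      (hlin i).2 _ _ (Or.inr ⟨x, y, rfl, rfl, hxy⟩)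
    have h2 : L i (Sum.inl y) (Sum.inr x) :=
      (hlin i).2 _ _ (Or.inr ⟨y, x, rfl, rfl, hxy.symm⟩)
    have htot := (hlin i).1.total
    have htrans := (hlin i).1.trans
    have h3 : L i (Sum.inr y) (Sum.inl y) := by
      rcases htot (Sum.inr y) (Sum.inl y) with h | h
      · exact h
      · exact absurd h (hce ▸ hc y)
    exact hc x (htrans _ _ _ h1 (htrans _ _ _ h3 h2))
  have hcol : G.Colorable n := ⟨SimpleGraph.Coloring.mk c fun h => hproper h⟩
  exact ⟨hcol, hcol.chromaticNumber_le⟩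
end

section
/- For every n ≥ 2, let G be the bipartite graph K_{n,n} minus a perfect matching: the graph on vertex set Fin n ⊕ Fin n in which a left vertex i and a right vertex j are adjacent if and only if i ≠ j (with no edges inside either side). Then the chromatic number of G equals 2, while the adjacency poset A_G has dimension exactly n. Hence the dimension of the adjacency poset can be arbitrarily larger than the chromatic number. -/
/-- `K_{n,n}` minus a perfect matching: left vertex `i` is adjacent to right
vertex `j` iff `i ≠ j`, with no edges inside either side. -/
def matchingComplement (n : ℕ) : SimpleGraph (Fin n ⊕ Fin n) :=
  SimpleGraph.fromRel (fun p q => ∃ i j : Fin n, p = Sum.inl i ∧ q = Sum.inr j ∧ i ≠ j)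

/-! ### Auxiliary constructions for the realizer -/

/-- Rank within one copy of the standard example, for the `k`-th linear extension. -/
def rkOne (n : ℕ) (k : Fin n) : Fin n ⊕ Fin n → ℕ
  | Sum.inl i => if i.val = k.val then n + 1 else i.val
  | Sum.inr j => if j.val = k.val then n else n + 2 + j.val

/-- Rank function on the adjacency poset of `matchingComplement n` defining the
`k`-th linear extension. -/
def rk (n : ℕ) (k : Fin n) : (Fin n ⊕ Fin n) ⊕ (Fin n ⊕ Fin n) → ℕ
  | Sum.inl (Sum.inl i) => (if k.val = 0 then 2 * n + 2 else 0) + rkOne n k (Sum.inl i)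
  | Sum.inr (Sum.inr j) => (if k.val = 0 then 2 * n + 2 else 0) + rkOne n k (Sum.inr j)
  | Sum.inl (Sum.inr i) => (if k.val = 0 then 0 else 2 * n + 2) + rkOne n k (Sum.inl i)
  | Sum.inr (Sum.inl j) => (if k.val = 0 then 0 else 2 * n + 2) + rkOne n k (Sum.inr j)

lemma rk_injective (n : ℕ) (k : Fin n) : Function.Injective (rk n k) := by
  intro p q h
  have hk := k.isLt
  rcases p with (i | i) | (i | i) <;> rcases q with (j | j) | (j | j) <;>
    have hi := i.isLt <;> have hj := j.isLt <;>
    simp only [rk, rkOne] at h <;>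
    first
    | (exfalso; split_ifs at h <;> first | omega | exact ‹False›.elim)
    | (have hij : i = j := Fin.ext (by split_ifs at h <;> first | omega | exact ‹False›.elim); rw [hij])

lemma rkOne_lt (n : ℕ) (k i j : Fin n) (hij : i.val ≠ j.val) :
    rkOne n k (Sum.inl i) < rkOne n k (Sum.inr j) := by
  have hi := i.isLt; have hj := j.isLt; have hk := k.isLt
  simp only [rkOne]
  split_ifs <;> omega

/-- Each `rk`-induced order extends the adjacency poset. -/
lemma rk_extends (n : ℕ) (k : Fin n) (p q : (Fin n ⊕ Fin n) ⊕ (Fin n ⊕ Fin n))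
    (h : adjLE (matchingComplement n) p q) : rk n k p ≤ rk n k q := by
  rcases h with rfl | ⟨a, b, rfl, rfl, hab⟩
  · exact le_rfl
  · rw [matchingComplement, SimpleGraph.fromRel_adj] at hab
    obtain ⟨hne, h | h⟩ := hab
    · obtain ⟨i, j, rfl, rfl, hij⟩ := h
      simp only [rk]
      exact Nat.add_le_add_left (le_of_lt (rkOne_lt n k i j
        (fun e => hij (Fin.ext e)))) _
    · obtain ⟨i, j, rfl, rfl, hij⟩ := h
      simp only [rk]
      exact Nat.add_le_add_left (le_of_lt (rkOne_lt n k j i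
        (fun e => hij (Fin.ext e.symm)))) _

lemma mc_adj_lr (n : ℕ) (i j : Fin n) (hij : i.val ≠ j.val) :
    (matchingComplement n).Adj (Sum.inl i) (Sum.inr j) := by
  rw [matchingComplement, SimpleGraph.fromRel_adj]
  exact ⟨by simp, Or.inl ⟨i, j, rfl, rfl, fun e => hij (congrArg Fin.val e)⟩⟩

lemma mc_adj_rl (n : ℕ) (i j : Fin n) (hij : i.val ≠ j.val) :
    (matchingComplement n).Adj (Sum.inr i) (Sum.inl j) := by
  rw [matchingComplement, SimpleGraph.fromRel_adj]
  exact ⟨by simp, Or.inr ⟨j, i, rfl, rfl, fun e => hij (congrArg Fin.val e.symm)⟩⟩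

/-- If all the `rk`-orders agree that `p ≤ q`, then `p ≤ q` in the adjacency poset. -/
lemma rk_reverse (n : ℕ) (hn : 2 ≤ n) (p q : (Fin n ⊕ Fin n) ⊕ (Fin n ⊕ Fin n))
    (h : ∀ k : Fin n, rk n k p ≤ rk n k q) : adjLE (matchingComplement n) p q := by
  set k0 : Fin n := ⟨0, by omega⟩ with hk0def
  set k1 : Fin n := ⟨1, by omega⟩ with hk1def
  have hk0 : k0.val = 0 := rfl
  have hk1 : k1.val = 1 := rfl
  rcases p with (i | i) | (i | i) <;> rcases q with (j | j) | (j | j) <;>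
      have hi := i.isLt <;> have hj := j.isLt
  -- p = x i (left vertex, minimal), q = x j
  · have H := h i
    simp only [rk, rkOne] at H
    have hij : i = j := Fin.ext (by have hiv := i.isLt; split_ifs at H <;> first | omega | exact ‹False›.elim)
    exact Or.inl (by rw [hij])
  -- p = x i, q = u j : cross A → B, impossible
  · exfalso; have H := h k0; simp only [rk, rkOne] at H; split_ifs at H <;> first | omega | exact ‹False›.elim
  -- p = x i, q = v j : cross A → B, impossible
  · exfalso; have H := h k0; simp only [rk, rkOne] at H; split_ifs at H <;> first | omega | exact ‹False›.elim
  -- p = x i, q = y j : comparable iff i ≠ j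
  · have hij : i.val ≠ j.val := by
      intro e
      have H := h i
      simp only [rk, rkOne] at H
      split_ifs at H <;> first | omega | exact ‹False›.elim
    exact Or.inr ⟨Sum.inl i, Sum.inr j, rfl, rfl, mc_adj_lr n i j hij⟩
  -- p = u i, q = x j : cross B → A, impossible
  · exfalso; have H := h k1; simp only [rk, rkOne] at H; split_ifs at H <;> first | omega | exact ‹False›.elim
  -- p = u i, q = u j
  · have H := h i
    simp only [rk, rkOne] at H
    have hij : i = j := Fin.ext (by split_ifs at H <;> first | omega | exact ‹False›.elim)
    exact Or.inl (by rw [hij])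
  -- p = u i, q = v j : comparable iff i ≠ j
  · have hij : i.val ≠ j.val := by
      intro e
      have H := h i
      simp only [rk, rkOne] at H
      split_ifs at H <;> first | omega | exact ‹False›.elim
    exact Or.inr ⟨Sum.inr i, Sum.inl j, rfl, rfl, mc_adj_rl n i j hij⟩
  -- p = u i, q = y j : cross B → A, impossible
  · exfalso; have H := h k1; simp only [rk, rkOne] at H; split_ifs at H <;> first | omega | exact ‹False›.elim
  -- p = v i (maximal), q = x j : both... v in B, x in A : impossible
  · exfalso; have H := h k1; simp only [rk, rkOne] at H; split_ifs at H <;> first | omega | exact ‹False›.elim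
  -- p = v i, q = u j : maximal above minimal in same copy, impossible
  · exfalso
    by_cases hzero : i.val = 0
    · have H := h k1; simp only [rk, rkOne] at H; split_ifs at H <;> first | omega | exact ‹False›.elim
    · have H := h k0; simp only [rk, rkOne] at H; split_ifs at H <;> first | omega | exact ‹False›.elim
  -- p = v i, q = v j
  · have H := h j
    simp only [rk, rkOne] at H
    have hij : i = j := Fin.ext (by split_ifs at H <;> first | omega | exact ‹False›.elim)
    exact Or.inl (by rw [hij])
  -- p = v i, q = y j : cross B → A, impossible
  · exfalso; have H := h k1; simp only [rk, rkOne] at H; split_ifs at H <;> first | omega | exact ‹False›.elim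
  -- p = y i, q = x j : maximal above minimal in same copy, impossible
  · exfalso
    by_cases hzero : i.val = 0
    · have H := h k1; simp only [rk, rkOne] at H; split_ifs at H <;> first | omega | exact ‹False›.elim
    · have H := h k0; simp only [rk, rkOne] at H; split_ifs at H <;> first | omega | exact ‹False›.elim
  -- p = y i, q = u j : cross A → B, impossible
  · exfalso; have H := h k0; simp only [rk, rkOne] at H; split_ifs at H <;> first | omega | exact ‹False›.elim
  -- p = y i, q = v j : cross A → B, impossible
  · exfalso; have H := h k0; simp only [rk, rkOne] at H; split_ifs at H <;> first | omega | exact ‹False›.elim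
  -- p = y i, q = y j
  · have H := h j
    simp only [rk, rkOne] at H
    have hij : i = j := Fin.ext (by split_ifs at H <;> first | omega | exact ‹False›.elim)
    exact Or.inl (by rw [hij])

/-- For `n ≥ 2`, `K_{n,n}` minus a perfect matching has chromatic number 2 while its
adjacency poset has dimension exactly `n`: the dimension of the adjacency poset can be
arbitrarily larger than the chromatic number. -/
theorem matchingComplement_chromatic_two_adjacency_dim_eq
    (n : ℕ) (hn : 2 ≤ n) :
    (matchingComplement n).chromaticNumber = 2 ∧
    (∃ L : Fin n → ((Fin n ⊕ Fin n) ⊕ (Fin n ⊕ Fin n) →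
        (Fin n ⊕ Fin n) ⊕ (Fin n ⊕ Fin n) → Prop),
      IsRealizer (adjLE (matchingComplement n)) L) ∧
    (∀ m : ℕ, m < n →
      ¬ ∃ L : Fin m → ((Fin n ⊕ Fin n) ⊕ (Fin n ⊕ Fin n) →
          (Fin n ⊕ Fin n) ⊕ (Fin n ⊕ Fin n) → Prop),
        IsRealizer (adjLE (matchingComplement n)) L) := by
  refine ⟨?_, ?_, ?_⟩
  -- chromatic number = 2
  · have hcol : (matchingComplement n).Colorable 2 := by
      refine ⟨SimpleGraph.Coloring.mk
        (fun v => match v with | Sum.inl _ => 0 | Sum.inr _ => 1) ?_⟩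
      intro a b hab
      rw [matchingComplement, SimpleGraph.fromRel_adj] at hab
      obtain ⟨hne, h | h⟩ := hab <;> obtain ⟨i, j, rfl, rfl, hij⟩ := h <;> simp
    rw [← Nat.cast_two, SimpleGraph.chromaticNumber_eq_iff_forall_surjective hcol]
    intro C b
    have h : (matchingComplement n).Adj (Sum.inl ⟨0, by omega⟩) (Sum.inr ⟨1, by omega⟩) :=
      mc_adj_lr n _ _ (by simp)
    by_cases he : C (Sum.inl ⟨0, by omega⟩) = b
    · exact ⟨_, he⟩
    by_cases he' : C (Sum.inr ⟨1, by omega⟩) = b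
    · exact ⟨_, he'⟩
    · simpa using Fintype.two_lt_card_iff.2 ⟨_, _, _, C.valid h, he, he'⟩
  -- realizer of size n
  · refine ⟨fun k p q => rk n k p ≤ rk n k q, fun k => ⟨?_, fun p q => rk_extends n k p q⟩, ?_⟩
    · exact
        { refl := fun a => le_rfl
          trans := fun a b c => le_trans
          antisymm := fun a b h1 h2 => rk_injective n k (le_antisymm h1 h2)
          total := fun a b => le_total _ _ }
    · intro p q
      exact ⟨fun h k => rk_extends n k p q h, rk_reverse n hn p q⟩
  -- no realizer of size m < n
  · rintro m hm ⟨L, hL⟩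
    -- for each i, some order reverses the critical pair (x i, y i)
    have hcrit : ∀ i : Fin n, ∃ k : Fin m,
        ¬ L k (Sum.inl (Sum.inl i)) (Sum.inr (Sum.inr i)) := by
      intro i
      by_contra hc
      push_neg at hc
      have := (hL.2 (Sum.inl (Sum.inl i)) (Sum.inr (Sum.inr i))).2 hc
      rcases this with h | ⟨a, b, ha, hb, hab⟩
      · exact absurd h (by simp)
      · obtain rfl : a = Sum.inl i := (Sum.inl.inj ha).symm
        obtain rfl : b = Sum.inr i := (Sum.inr.inj hb).symm
        rw [matchingComplement, SimpleGraph.fromRel_adj] at hab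
        obtain ⟨-, h | h⟩ := hab
        · obtain ⟨i', j', hi', hj', hij'⟩ := h
          exact hij' ((Sum.inl.inj hi').symm.trans (Sum.inr.inj hj'))
        · obtain ⟨i', j', hi', hj', hij'⟩ := h
          exact absurd hi' (by simp)
    choose f hf using hcrit
    have hfinj : Function.Injective f := by
      intro i j hij
      by_contra hne
      have hij' : i ≠ j := hne
      have hlin := (hL.1 (f i)).1
      have htot := hlin.total
      -- y i ≤ x i in L (f i)
      have h1 : L (f i) (Sum.inr (Sum.inr i)) (Sum.inl (Sum.inl i)) := by
        rcases htot (Sum.inr (Sum.inr i)) (Sum.inl (Sum.inl i)) with h | h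
        · exact h
        · exact absurd h (hf i)
      have h2 : L (f i) (Sum.inr (Sum.inr j)) (Sum.inl (Sum.inl j)) := by
        have := hf j; rw [← hij] at this
        rcases htot (Sum.inr (Sum.inr j)) (Sum.inl (Sum.inl j)) with h | h
        · exact h
        · exact absurd h this
      have h3 : L (f i) (Sum.inl (Sum.inl i)) (Sum.inr (Sum.inr j)) :=
        (hL.1 (f i)).2 _ _ (Or.inr ⟨Sum.inl i, Sum.inr j, rfl, rfl,
          mc_adj_lr n i j (fun e => hij' (Fin.ext e))⟩)
      have h4 : L (f i) (Sum.inl (Sum.inl j)) (Sum.inr (Sum.inr i)) :=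
        (hL.1 (f i)).2 _ _ (Or.inr ⟨Sum.inl j, Sum.inr i, rfl, rfl,
          mc_adj_lr n j i (fun e => hij' (Fin.ext e.symm))⟩)
      have htr := hlin.trans
      have hA : L (f i) (Sum.inl (Sum.inl i)) (Sum.inl (Sum.inl j)) :=
        htr _ _ _ h3 h2
      have hB : L (f i) (Sum.inl (Sum.inl j)) (Sum.inl (Sum.inl i)) :=
        htr _ _ _ h4 h1
      have : (Sum.inl (Sum.inl i) : (Fin n ⊕ Fin n) ⊕ (Fin n ⊕ Fin n)) =
          Sum.inl (Sum.inl j) := hlin.antisymm _ _ hA hB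
      exact hij' (by injection (by injection this : (Sum.inl i : Fin n ⊕ Fin n) = Sum.inl j))
    have := Fintype.card_le_of_injective f hfinj
    simp at this
    omega
end

section
/- For every n ≥ 2, the standard example S_n — the height-2 partial order on Fin n ⊕ Fin n with minimal elements x_1, …, x_n and maximal elements y_1, …, y_n, where x_i < y_j if and only if i ≠ j and there are no other strict comparabilities — has dimension exactly n: it admits a realizer of n linear extensions, and no family of n − 1 linear extensions realizes it. -/
/-- The order relation of the standard example `S_n`: minimal elements `x_i = Sum.inl i`,
maximal elements `y_j = Sum.inr j`, with `x_i ≤ y_j` iff `i ≠ j`. -/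
def stdLE (n : ℕ) : Fin n ⊕ Fin n → Fin n ⊕ Fin n → Prop :=
  fun p q => p = q ∨ ∃ i j : Fin n, p = Sum.inl i ∧ q = Sum.inr j ∧ i ≠ j

/-- Rank function for the `k`-th linear extension in the realizer of `S_n`. -/
def rkk (n : ℕ) (k : Fin n) : Fin n ⊕ Fin n → ℕ
  | Sum.inl i => if i = k then n + 1 else i.val
  | Sum.inr j => if j = k then n else n + 2 + j.val

lemma rkk_inj (n : ℕ) (k : Fin n) : Function.Injective (rkk n k) := by
  intro p q h
  rcases p with i | i <;> rcases q with j | j <;>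
    simp only [rkk] at h <;>
    have hi := i.isLt <;> have hj := j.isLt <;>
    split_ifs at h with h1 h2 h2 <;>
    first
    | (subst h1; subst h2; rfl)
    | omega
    | (exact congrArg _ (Fin.ext (by omega)))

lemma rkk_mono (n : ℕ) (k : Fin n) (i j : Fin n) (hij : i ≠ j) :
    rkk n k (Sum.inl i) ≤ rkk n k (Sum.inr j) := by
  have hi := i.isLt
  simp only [rkk]
  split_ifs with h1 h2 h2 <;> first | omega | (exact absurd (h1.trans h2.symm) hij)

/-- For `n ≥ 2`, the standard example `S_n` has dimension exactly `n`: it admits a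
realizer of `n` linear extensions, and no family of `n - 1` linear extensions realizes it. -/
theorem standardExample_dim_eq (n : ℕ) (hn : 2 ≤ n) :
    (∃ L : Fin n → (Fin n ⊕ Fin n → Fin n ⊕ Fin n → Prop),
      IsRealizer (stdLE n) L) ∧
    ¬ ∃ L : Fin (n - 1) → (Fin n ⊕ Fin n → Fin n ⊕ Fin n → Prop),
      IsRealizer (stdLE n) L := by
  constructor
  · refine ⟨fun k p q => rkk n k p ≤ rkk n k q, fun k => ⟨?_, ?_⟩, ?_⟩
    · exact { refl := fun a => le_refl _
              trans := fun a b c => le_trans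
              antisymm := fun a b h h' => rkk_inj n k (le_antisymm h h')
              total := fun a b => le_total _ _ }
    · rintro p q (rfl | ⟨i, j, rfl, rfl, hij⟩)
      · exact le_refl _
      · exact rkk_mono n k i j hij
    · intro p q
      constructor
      · rintro (rfl | ⟨i, j, rfl, rfl, hij⟩) k
        · exact le_refl _
        · exact rkk_mono n k i j hij
      · intro h
        by_contra hc
        rw [stdLE] at hc
        push_neg at hc
        obtain ⟨hne, hc⟩ := hc
        rcases p with i | i <;> rcases q with j | j
        · have hij : i ≠ j := fun e => hne (congrArg _ e)
          have hk := h i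
          simp only [rkk] at hk
          rw [if_true, if_neg (Ne.symm hij)] at hk
          have := j.isLt; omega
        · have hij : i = j := hc i j rfl rfl
          subst hij
          have hk := h i
          simp only [rkk] at hk
          rw [if_true, if_true] at hk
          omega
        · set k : Fin n := if i.val = 0 then ⟨1, by omega⟩ else ⟨0, by omega⟩ with hkdef
          have hki : i ≠ k := by
            simp only [hkdef]
            split_ifs with h0 <;> intro e <;> rw [Fin.ext_iff] at e <;> simp at e <;> omega
          have hk := h k
          simp only [rkk] at hk
          rw [if_neg hki] at hk
          have := j.isLt
          split_ifs at hk <;> omega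
        · have hij : i ≠ j := fun e => hne (congrArg _ e)
          have hk := h j
          simp only [rkk] at hk
          rw [if_neg hij, if_true] at hk
          have := i.isLt; omega
  · rintro ⟨L, hext, hinter⟩
    -- for each i, some linear extension puts y_i below x_i
    have key : ∀ i : Fin n, ∃ k : Fin (n - 1), L k (Sum.inr i) (Sum.inl i) := by
      intro i
      have hns : ¬ stdLE n (Sum.inl i) (Sum.inr i) := by
        rintro (h | ⟨a, b, ha, hb, hab⟩)
        · exact Sum.inl_ne_inr h
        · cases ha; cases hb; exact hab rfl
      rw [hinter] at hns
      push_neg at hns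
      obtain ⟨k, hk⟩ := hns
      refine ⟨k, ?_⟩
      rcases (hext k).1.total (Sum.inr i) (Sum.inl i) with h | h
      · exact h
      · exact absurd h hk
    choose f hf using key
    have hcard : Fintype.card (Fin (n - 1)) < Fintype.card (Fin n) := by
      simp only [Fintype.card_fin]; omega
    obtain ⟨i, j, hij, hfij⟩ := Fintype.exists_ne_map_eq_of_card_lt f hcard
    set k := f i with hk
    have h1 : L k (Sum.inr i) (Sum.inl i) := hf i
    have h2 : L k (Sum.inr j) (Sum.inl j) := by rw [hfij]; exact hf j
    have h3 : L k (Sum.inl i) (Sum.inr j) :=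
      (hext k).2 _ _ (Or.inr ⟨i, j, rfl, rfl, hij⟩)
    have h4 : L k (Sum.inl j) (Sum.inr i) :=
      (hext k).2 _ _ (Or.inr ⟨j, i, rfl, rfl, Ne.symm hij⟩)
    have htr := (hext k).1.trans
    have h5 : L k (Sum.inl i) (Sum.inr i) := htr _ _ _ (htr _ _ _ h3 h2) h4
    have := (hext k).1.antisymm _ _ h5 h1
    exact Sum.inl_ne_inr this
end

section
/- Let G be a finite simple graph whose vertex set carries a linear order in which no two edges cross (no vertices a < c < b < d with ab and cd both edges). For each vertex v, let I_v denote the open interval of vertices strictly between the minimum and the maximum of N(v) ∪ {v}, where N(v) is the set of neighbours of v. Then for any two non-adjacent vertices u and v, the intervals I_u and I_v are either disjoint, or one of them is contained in the other. -/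
/-- `I_v`: the open interval of vertices strictly between the minimum and the maximum of
`N(v) ∪ {v}` in the vertex order. -/
def vertexInterval {V : Type*} [Fintype V] [LinearOrder V]
    (G : SimpleGraph V) [DecidableRel G.Adj] (v : V) : Set V :=
  Set.Ioo ((insert v (G.neighborFinset v)).min' ⟨v, Finset.mem_insert_self v _⟩)
          ((insert v (G.neighborFinset v)).max' ⟨v, Finset.mem_insert_self v _⟩)

/-- Abstract crossing lemma: if `u, v` are nonadjacent, `u ≠ v`, with
`mu < mv < Mu < Mv` where `mu ≤ u ≤ Mu`, `mv ≤ v ≤ Mv`, and the strict bounds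
are neighbours, then two edges cross. -/
lemma cross_aux {V : Type*} [LinearOrder V] (G : SimpleGraph V) (hG : NoCrossing G)
    (u v mu Mu mv Mv : V)
    (hmu : mu ≤ u) (hMu : u ≤ Mu) (hamu : mu < u → G.Adj mu u) (haMu : u < Mu → G.Adj u Mu)
    (hmv : mv ≤ v) (hMv : v ≤ Mv) (hamv : mv < v → G.Adj mv v) (haMv : v < Mv → G.Adj v Mv)
    (huv : ¬ G.Adj u v) (hne : u ≠ v)
    (h1 : mu < mv) (h2 : mv < Mu) (h3 : Mu < Mv) : False := by
  rcases lt_trichotomy v Mu with hv | hv | hv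
  · -- v < Mu, so edge (v, Mv) exists
    have eV : G.Adj v Mv := haMv (lt_trans hv h3)
    rcases lt_or_gt_of_ne hne with h | h
    · -- u < v: edges (u,Mu),(v,Mv) cross
      exact hG u Mu v Mv h hv h3 (haMu (lt_trans h hv)) eV
    · -- v < u: edges (mu,u),(v,Mv) cross
      have : mu < v := lt_of_lt_of_le h1 hmv
      exact hG mu u v Mv this h (lt_of_le_of_lt hMu h3) (hamu (lt_trans this h)) eV
  · -- v = Mu: then v is a neighbour of u
    have hu : u < Mu := lt_of_le_of_ne hMu (by rw [← hv]; exact hne)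
    exact huv (by rw [hv]; exact haMu hu)
  · -- Mu < v, so edge (mv, v) exists
    have eV : G.Adj mv v := hamv (lt_trans h2 hv)
    rcases lt_trichotomy u mv with h | h | h
    · -- u < mv: edges (u,Mu),(mv,v) cross
      exact hG u Mu mv v h h2 hv (haMu (lt_trans h h2)) eV
    · -- u = mv: u adjacent to v
      exact huv (by rw [h]; exact eV)
    · -- mv < u: edges (mu,u),(mv,v) cross
      exact hG mu u mv v h1 h (lt_of_le_of_lt hMu hv) (hamu (lt_trans h1 h)) eV

lemma min'_le_self {V : Type*} [Fintype V] [LinearOrder V]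
    (G : SimpleGraph V) [DecidableRel G.Adj] (v : V) :
    (insert v (G.neighborFinset v)).min' ⟨v, Finset.mem_insert_self v _⟩ ≤ v :=
  Finset.min'_le _ _ (Finset.mem_insert_self v _)

lemma self_le_max' {V : Type*} [Fintype V] [LinearOrder V]
    (G : SimpleGraph V) [DecidableRel G.Adj] (v : V) :
    v ≤ (insert v (G.neighborFinset v)).max' ⟨v, Finset.mem_insert_self v _⟩ :=
  Finset.le_max' _ _ (Finset.mem_insert_self v _)

lemma adj_min' {V : Type*} [Fintype V] [LinearOrder V]
    (G : SimpleGraph V) [DecidableRel G.Adj] (v : V)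
    (h : (insert v (G.neighborFinset v)).min' ⟨v, Finset.mem_insert_self v _⟩ < v) :
    G.Adj ((insert v (G.neighborFinset v)).min' ⟨v, Finset.mem_insert_self v _⟩) v := by
  have hm := Finset.min'_mem (insert v (G.neighborFinset v)) ⟨v, Finset.mem_insert_self v _⟩
  rcases Finset.mem_insert.mp hm with he | hmem
  · exact absurd he (ne_of_lt h)
  · exact (G.mem_neighborFinset _ _ |>.mp hmem).symm

lemma adj_max' {V : Type*} [Fintype V] [LinearOrder V]
    (G : SimpleGraph V) [DecidableRel G.Adj] (v : V)
    (h : v < (insert v (G.neighborFinset v)).max' ⟨v, Finset.mem_insert_self v _⟩) :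
    G.Adj v ((insert v (G.neighborFinset v)).max' ⟨v, Finset.mem_insert_self v _⟩) := by
  have hm := Finset.max'_mem (insert v (G.neighborFinset v)) ⟨v, Finset.mem_insert_self v _⟩
  rcases Finset.mem_insert.mp hm with he | hmem
  · exact absurd he.symm (ne_of_lt h)
  · exact (G.mem_neighborFinset _ _ |>.mp hmem).symm.symm

/-- In an outerplanarly embedded finite graph, the intervals `I_u`, `I_v` of two
non-adjacent vertices are disjoint or one contains the other. -/
theorem intervals_nested_or_disjoint
    {V : Type*} [Fintype V] [LinearOrder V]
    (G : SimpleGraph V) [DecidableRel G.Adj] (hG : NoCrossing G)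
    (u v : V) (huv : ¬ G.Adj u v) :
    Disjoint (vertexInterval G u) (vertexInterval G v) ∨
      vertexInterval G u ⊆ vertexInterval G v ∨
      vertexInterval G v ⊆ vertexInterval G u := by
  by_cases hd : Disjoint (vertexInterval G u) (vertexInterval G v)
  · exact Or.inl hd
  by_cases hne : u = v
  · exact Or.inr (Or.inl (by rw [hne]))
  obtain ⟨x, hxu, hxv⟩ := Set.not_disjoint_iff.mp hd
  set mu := (insert u (G.neighborFinset u)).min' ⟨u, Finset.mem_insert_self u _⟩ with hmu_def
  set Mu := (insert u (G.neighborFinset u)).max' ⟨u, Finset.mem_insert_self u _⟩ with hMu_def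
  set mv := (insert v (G.neighborFinset v)).min' ⟨v, Finset.mem_insert_self v _⟩ with hmv_def
  set Mv := (insert v (G.neighborFinset v)).max' ⟨v, Finset.mem_insert_self v _⟩ with hMv_def
  have hxu' : mu < x ∧ x < Mu := hxu
  have hxv' : mv < x ∧ x < Mv := hxv
  rcases le_or_gt mv mu with h1 | h1
  · rcases le_or_gt Mu Mv with h2 | h2
    · -- I_u ⊆ I_v
      exact Or.inr (Or.inl (Set.Ioo_subset_Ioo h1 h2))
    · -- mv ≤ mu, Mv < Mu : crossing with v,u swapped unless mv = mu
      rcases eq_or_lt_of_le h1 with he | h1'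
      · exact Or.inr (Or.inr (Set.Ioo_subset_Ioo (le_of_eq he.symm) (le_of_lt h2)))
      · exact absurd (cross_aux G hG v u mv Mv mu Mu
          (min'_le_self G v) (self_le_max' G v) (adj_min' G v) (adj_max' G v)
          (min'_le_self G u) (self_le_max' G u) (adj_min' G u) (adj_max' G u)
          (fun h => huv h.symm) (Ne.symm hne) h1'
          (lt_trans hxu'.1 hxv'.2) h2) (fun h => h)
  · rcases le_or_gt Mv Mu with h2 | h2
    · -- I_v ⊆ I_u
      exact Or.inr (Or.inr (Set.Ioo_subset_Ioo (le_of_lt h1) h2))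
    · -- mu < mv, Mu < Mv : crossing
      exact absurd (cross_aux G hG u v mu Mu mv Mv
        (min'_le_self G u) (self_le_max' G u) (adj_min' G u) (adj_max' G u)
        (min'_le_self G v) (self_le_max' G v) (adj_min' G v) (adj_max' G v)
        huv hne h1 (lt_trans hxv'.1 hxu'.2) h2) (fun h => h)
end

section
/- Let P be a finite partial order and let L_1, …, L_n be linear extensions of P such that every critical pair (x, y) of P is reversed in some L_i (i.e., y ≤ x in L_i). Then L_1, …, L_n form a realizer of P: for all elements p, q, one has p ≤ q in P if and only if p ≤ q in every L_i. -/
/-- The strict order associated with a relation `P`. -/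
def strictRel {X : Type*} (P : X → X → Prop) (a b : X) : Prop := P a b ∧ a ≠ b

/-- `(x, y)` is a critical pair of `P`: an incomparable pair such that `z < x` implies
`z < y` and `w > y` implies `w > x`. -/
def IsCriticalPair {X : Type*} (P : X → X → Prop) (x y : X) : Prop :=
  ¬ P x y ∧ ¬ P y x ∧
  (∀ z, strictRel P z x → strictRel P z y) ∧
  (∀ w, strictRel P y w → strictRel P x w)

/-- If every critical pair of a finite partial order `P` is reversed in some member of a
(nonempty) family of linear extensions of `P`, then the family is a realizer of `P`. -/
theorem realizer_of_reversing_critical_pairs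
    {X : Type*} [Fintype X] (P : X → X → Prop) (hP : IsPartialOrder X P)
    (n : ℕ) (hn : 1 ≤ n) (L : Fin n → X → X → Prop)
    (hL : ∀ i, IsLinearExt P (L i))
    (hcrit : ∀ x y, IsCriticalPair P x y → ∃ i, L i y x) :
    ∀ p q, P p q ↔ ∀ i, L i p q := by
  intro p q
  constructor
  · intro h i; exact (hL i).2 p q h
  · intro h
    by_contra hpq
    have hne : p ≠ q := fun e => hpq (e ▸ hP.refl p)
    have i0 : Fin n := ⟨0, hn⟩
    have hqp : ¬ P q p := fun hqp =>
      hne (((hL i0).1).antisymm p q (h i0) ((hL i0).2 q p hqp))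
    classical
    letI : PartialOrder X :=
      { le := P, le_refl := hP.refl, le_trans := hP.trans,
        le_antisymm := hP.antisymm }
    set S : Set X := {x | P x p ∧ ∃ y, ¬P x y ∧ ¬P y x ∧ P q y} with hS
    have hpS : p ∈ S := ⟨hP.refl p, q, hpq, hqp, hP.refl q⟩
    obtain ⟨x, hxS, hxmin⟩ :=
      Set.Finite.exists_minimalFor id S (Set.toFinite S) ⟨p, hpS⟩
    obtain ⟨hxp, y0, hy0⟩ := hxS
    set T : Set X := {y | ¬P x y ∧ ¬P y x ∧ P q y} with hT
    obtain ⟨y, hyT, hymax⟩ :=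
      Set.Finite.exists_maximalFor id T (Set.toFinite T) ⟨y0, hy0⟩
    obtain ⟨hxy, hyx, hqy⟩ := hyT
    have hcp : IsCriticalPair P x y := by
      refine ⟨hxy, hyx, ?_, ?_⟩
      · rintro z ⟨hzx, hzne⟩
        by_cases hzy : P z y
        · refine ⟨hzy, ?_⟩
          rintro rfl; exact hyx hzx
        · have hyz : ¬ P y z := fun hyz => hyx (hP.trans _ _ _ hyz hzx)
          have hzS : z ∈ S := ⟨hP.trans _ _ _ hzx hxp, y, hzy, hyz, hqy⟩
          exact ((hzne (show z = x from hP.antisymm z x hzx (hxmin hzS hzx))).elim)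
      · rintro w ⟨hyw, hwne⟩
        by_cases hxw : P x w
        · refine ⟨hxw, ?_⟩
          rintro rfl; exact hyx hyw
        · have hwx : ¬ P w x := fun hwx => hyx (hP.trans _ _ _ hyw hwx)
          have hwT : w ∈ T := ⟨hxw, hwx, hP.trans _ _ _ hqy hyw⟩
          exact ((hwne (show y = w from hP.antisymm y w hyw (hymax hwT hyw))).elim)
    obtain ⟨i, hi⟩ := hcrit x y hcp
    have hLi := (hL i).1
    have hq_p : L i q p :=
      hLi.trans _ _ _ ((hL i).2 q y hqy) (hLi.trans _ _ _ hi ((hL i).2 x p hxp))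
    exact hne (hLi.antisymm p q (h i) hq_p)
end

section
/- Every finite simple graph whose vertex set carries a linear order in which no two edges cross (i.e., there are no vertices a < c < b < d with ab and cd both edges) has a proper vertex coloring with 3 colors; that is, its chromatic number is at most 3. -/
/-- In a non-crossing graph on a nonempty finite linearly ordered vertex set there is a
vertex with at most two neighbours. -/
lemma noCrossing_exists_small {V : Type*} [Fintype V] [LinearOrder V] [Nonempty V]
    (G : SimpleGraph V) (hG : NoCrossing G) :
    ∃ c s t : V, ∀ x, G.Adj c x → x = s ∨ x = t := by
  classical
  letI : LocallyFiniteOrder V := Fintype.toLocallyFiniteOrder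
  by_cases hS : ∃ p : V × V, G.Adj p.1 p.2 ∧ p.1 < p.2 ∧ (Finset.Ioo p.1 p.2).Nonempty
  · set F : Finset (V × V) :=
      Finset.univ.filter
        (fun p : V × V => G.Adj p.1 p.2 ∧ p.1 < p.2 ∧ (Finset.Ioo p.1 p.2).Nonempty) with hF
    have hFne : F.Nonempty := by
      obtain ⟨p, hp⟩ := hS
      exact ⟨p, by simp [hF, hp.1, hp.2.1, hp.2.2]⟩
    obtain ⟨p, hpF, hpmin⟩ :=
      Finset.exists_min_image F (fun p => (Finset.Ioo p.1 p.2).card) hFne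
    obtain ⟨a, b⟩ := p
    rw [hF, Finset.mem_filter] at hpF
    obtain ⟨-, hab, haltb, hne⟩ := hpF
    set c : V := (Finset.Ioo a b).max' hne with hc
    have hcmem : c ∈ Finset.Ioo a b := (Finset.Ioo a b).max'_mem hne
    rw [Finset.mem_Ioo] at hcmem
    obtain ⟨hac, hcb⟩ := hcmem
    -- every neighbour of c lies in [a, b]
    have hxb : ∀ x, G.Adj c x → x ≤ b := by
      intro x hx
      by_contra h
      push_neg at h
      exact hG a b c x hac hcb h hab hx
    have hax : ∀ x, G.Adj c x → a ≤ x := by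
      intro x hx
      by_contra h
      push_neg at h
      exact hG x c a b h hac hcb hx.symm hab
    -- interior neighbours x satisfy x < c and Ioo x c = ∅
    have hint : ∀ x, G.Adj c x → a < x → x < b → x < c ∧ ¬(Finset.Ioo x c).Nonempty := by
      intro x hx h1 h2
      have hxc : x ≠ c := fun h => G.loopless.irrefl c (h ▸ hx)
      have hxlec : x ≤ c := Finset.le_max' _ x (Finset.mem_Ioo.mpr ⟨h1, h2⟩)
      have hxltc : x < c := lt_of_le_of_ne hxlec hxc
      refine ⟨hxltc, fun hne' => ?_⟩
      have hmem : (x, c) ∈ F := by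
        simp only [hF, Finset.mem_filter, Finset.mem_univ, true_and]
        exact ⟨hx.symm, hxltc, hne'⟩
      have hlt : (Finset.Ioo x c).card < (Finset.Ioo a b).card := by
        apply Finset.card_lt_card
        constructor
        · intro y hy
          rw [Finset.mem_Ioo] at hy ⊢
          exact ⟨lt_trans h1 hy.1, lt_trans hy.2 hcb⟩
        · intro hsub
          have := hsub (Finset.mem_Ioo.mpr ⟨hac, hcb⟩)
          rw [Finset.mem_Ioo] at this
          exact lt_irrefl c this.2
      exact absurd (hpmin _ hmem) (not_le.mpr hlt)
    -- if c has an interior neighbour, it is not adjacent to a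
    have hnota : (∃ x, G.Adj c x ∧ a < x ∧ x < b) → ¬G.Adj c a := by
      rintro ⟨x, hx, h1, h2⟩ hca
      have hxltc := (hint x hx h1 h2).1
      have hmem : (a, c) ∈ F := by
        simp only [hF, Finset.mem_filter, Finset.mem_univ, true_and]
        exact ⟨hca.symm, hac, ⟨x, Finset.mem_Ioo.mpr ⟨h1, hxltc⟩⟩⟩
      have hlt : (Finset.Ioo a c).card < (Finset.Ioo a b).card := by
        apply Finset.card_lt_card
        constructor
        · intro y hy
          rw [Finset.mem_Ioo] at hy ⊢
          exact ⟨hy.1, lt_trans hy.2 hcb⟩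
        · intro hsub
          have := hsub (Finset.mem_Ioo.mpr ⟨hac, hcb⟩)
          rw [Finset.mem_Ioo] at this
          exact lt_irrefl c this.2
      exact absurd (hpmin _ hmem) (not_le.mpr hlt)
    by_cases hex : ∃ x, G.Adj c x ∧ a < x ∧ x < b
    · obtain ⟨d, hd, hd1, hd2⟩ := hex
      refine ⟨c, d, b, fun x hx => ?_⟩
      have h1 := hax x hx
      have h2 := hxb x hx
      rcases eq_or_lt_of_le h1 with h1' | h1'
      · exact absurd (h1' ▸ hx) (hnota ⟨d, hd, hd1, hd2⟩)
      rcases eq_or_lt_of_le h2 with h2' | h2'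
      · exact Or.inr h2'
      -- x is an interior neighbour; show x = d
      obtain ⟨hxc, hxe⟩ := hint x hx h1' h2'
      obtain ⟨hdc, hde⟩ := hint d hd hd1 hd2
      rcases lt_trichotomy x d with h | h | h
      · exact absurd ⟨d, Finset.mem_Ioo.mpr ⟨h, hdc⟩⟩ hxe
      · exact Or.inl h
      · exact absurd ⟨x, Finset.mem_Ioo.mpr ⟨h, hxc⟩⟩ hde
    · refine ⟨c, a, b, fun x hx => ?_⟩
      have h1 := hax x hx
      have h2 := hxb x hx
      rcases eq_or_lt_of_le h1 with h1' | h1'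
      · exact Or.inl h1'.symm
      rcases eq_or_lt_of_le h2 with h2' | h2'
      · exact Or.inr h2'
      exact absurd ⟨x, hx, h1', h2'⟩ hex
  · -- no edge has a vertex strictly between its endpoints: look at the minimum vertex
    push_neg at hS
    obtain ⟨m, hm⟩ := Finite.exists_min (id : V → V)
    simp only [id] at hm
    by_cases hex : ∃ d, G.Adj m d
    · obtain ⟨d, hd⟩ := hex
      refine ⟨m, d, d, fun x hx => Or.inl ?_⟩
      have hmx : m < x := lt_of_le_of_ne (hm x) (fun h => G.loopless.irrefl m (h ▸ hx))
      have hmd : m < d := lt_of_le_of_ne (hm d) (fun h => G.loopless.irrefl m (h ▸ hd))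
      have h1 := hS (m, x) hx hmx
      have h2 := hS (m, d) hd hmd
      rcases lt_trichotomy x d with h | h | h
      · exact absurd (⟨x, Finset.mem_Ioo.mpr ⟨hmx, h⟩⟩ : (Finset.Ioo m d).Nonempty) (Finset.not_nonempty_iff_eq_empty.mpr h2)
      · exact h
      · exact absurd (⟨d, Finset.mem_Ioo.mpr ⟨hmd, h⟩⟩ : (Finset.Ioo m x).Nonempty) (Finset.not_nonempty_iff_eq_empty.mpr h1)
    · push_neg at hex
      exact ⟨m, m, m, fun x hx => absurd hx (hex x)⟩

universe u

/-- Non-crossing graphs are 3-colorable: induction on the number of vertices. -/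
lemma noCrossing_exists_coloring :
    ∀ (n : ℕ) (V : Type u) [Fintype V] [LinearOrder V] (G : SimpleGraph V),
      Fintype.card V ≤ n → NoCrossing G →
      ∃ f : V → Fin 3, ∀ a b, G.Adj a b → f a ≠ f b := by
  intro n
  induction n with
  | zero =>
    intro V _ _ G hcard _
    have : IsEmpty V := Fintype.card_eq_zero_iff.mp (le_antisymm hcard (Nat.zero_le _))
    exact ⟨fun v => isEmptyElim v, fun a => isEmptyElim a⟩
  | succ n ih =>
    intro V _ _ G hcard hG
    classical
    cases isEmpty_or_nonempty V with
    | inl h => exact ⟨fun v => isEmptyElim v, fun a => isEmptyElim a⟩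
    | inr h =>
      obtain ⟨c, s, t, hcst⟩ := noCrossing_exists_small G hG
      let V' := {x : V // x ≠ c}
      let G' : SimpleGraph V' := SimpleGraph.comap Subtype.val G
      have hG' : NoCrossing G' := by
        intro a b x y h1 h2 h3 hadj hxy
        exact hG a b x y h1 h2 h3 hadj hxy
      have hcard' : Fintype.card V' ≤ n := by
        have : Fintype.card V' < Fintype.card V :=
          Fintype.card_subtype_lt (x := c) (by simp)
        omega
      obtain ⟨f', hf'⟩ := ih V' G' hcard' hG'
      have hk : ∀ x y : Fin 3, ∃ k : Fin 3, k ≠ x ∧ k ≠ y := by decide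
      set xs : Fin 3 := if h : s = c then 0 else f' ⟨s, h⟩ with hxs
      set xt : Fin 3 := if h : t = c then 0 else f' ⟨t, h⟩ with hxt
      obtain ⟨k, hk1, hk2⟩ := hk xs xt
      refine ⟨fun v => if h : v = c then k else f' ⟨v, h⟩, fun a b hab => ?_⟩
      by_cases ha : a = c <;> by_cases hb : b = c
      · rw [ha, hb] at hab; exact absurd hab (G.loopless.irrefl c)
      · subst ha
        rcases hcst b hab with hbs | hbt
        · subst hbs
          simpa [hb, hxs] using hk1
        · subst hbt
          simpa [hb, hxt] using hk2
      · subst hb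
        rcases hcst a hab.symm with has | hat
        · subst has
          simp only [dif_pos, dif_neg ha]
          intro hcontra
          exact hk1 (by simpa [hxs, ha] using hcontra.symm)
        · subst hat
          simp only [dif_pos, dif_neg ha]
          intro hcontra
          exact hk2 (by simpa [hxt, ha] using hcontra.symm)
      · have : G'.Adj ⟨a, ha⟩ ⟨b, hb⟩ := hab
        simpa [ha, hb] using hf' _ _ this

/-- Every outerplanarly embedded finite graph is properly 3-colorable; its chromatic
number is at most 3. -/
theorem noCrossing_colorable_three
    {V : Type*} [Fintype V] [LinearOrder V] (G : SimpleGraph V)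
    (hG : NoCrossing G) :
    G.Colorable 3 ∧ G.chromaticNumber ≤ 3 := by
  obtain ⟨f, hf⟩ := noCrossing_exists_coloring (Fintype.card V) V G le_rfl hG
  have hcol : G.Colorable 3 := ⟨SimpleGraph.Coloring.mk f (fun {a b} h => hf a b h)⟩
  refine ⟨hcol, ?_⟩
  have := hcol.chromaticNumber_le
  exact_mod_cast this
end
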